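/- arXiv:2006.08902 — 7 statements merged into one kernel-verified Lean document; each statement's English description precedes it below -/
import Mathlib

section
/- Let m ≥ 1 and let θ be an even partition of the set [±2m] = {-2m,...,-1,1,...,2m} (every block has even cardinality) with no block of the form {k,-k}. Then every connected component of the associated undirected graph G_θ (with vertex set the blocks of θ and one edge for each k ∈ [2m] joining the block containing k to the block containing -k) contains at least two edges; consequently the number of connected components of G_θ is at most m. -/
open scoped Classical

/-- The index set `[±2m] = {-2m, …, -1, 1, …, 2m}`. -/
noncomputable def pmSet (m : ℕ) : Finset ℤ := (Finset.Icc (-(2 * (m : ℤ))) (2 * (m : ℤ))).erase 0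

/-- Two edge indices `k, l ∈ [2m]` of the graph `G_θ` are adjacent when the edge joining the
blocks of `±k` and the edge joining the blocks of `±l` share an endpoint block. -/
def edgeAdj {m : ℕ} (θ : Finpartition (pmSet m)) (a b : ℤ) : Prop :=
  ∃ B ∈ θ.parts, (a ∈ B ∨ -a ∈ B) ∧ (b ∈ B ∨ -b ∈ B)

/-! The block of `k` has even size and is not `{k, -k}`, so it contains some `y ≠ ±k`; the edge
`±|y|` is then a second edge at that block. Hence every class of edges under `EqvGen edgeAdj`
has at least two members, and the `2m` edges fall into at most `m` classes. -/

namespace Finset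

theorem two_mul_card_image_filter_le_card {α : Type*} [DecidableEq α] {r : α → α → Prop}
    [DecidableRel r] (hr : Equivalence r) (s : Finset α)
    (h : ∀ a ∈ s, ∃ b ∈ s, b ≠ a ∧ r a b) :
    2 * #(s.image fun a => s.filter (r a)) ≤ #s := by
  refine mul_card_image_le_card s 2 fun c hc => ?_
  obtain ⟨a, ha, rfl⟩ := mem_image.1 hc
  obtain ⟨b, hb, hba, hab⟩ := h a ha
  have hclass : s.filter (r b) = s.filter (r a) := by
    ext y
    simp only [mem_filter]
    exact and_congr_right fun _ => ⟨hr.trans hab, hr.trans (hr.symm hab)⟩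
  exact one_lt_card.2 ⟨a, mem_filter.2 ⟨ha, rfl⟩, b, mem_filter.2 ⟨hb, hclass⟩, hba.symm⟩

theorem exists_mem_ne_ne_neg_of_even_card {α : Type*} [DecidableEq α] [InvolutiveNeg α]
    {B : Finset α} {k : α} (hk : k ∈ B) (heven : Even #B) (hne : B ≠ {k, -k}) :
    ∃ y ∈ B, y ≠ k ∧ y ≠ -k := by
  by_contra! hB
  have hsub : B ⊆ {k, -k} := fun y hy => by
    by_cases hyk : y = k
    · simp [hyk]
    · simp [hB y hy hyk]
  have hle : #B ≤ 2 := (card_le_card hsub).trans card_le_two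
  have hpos : 0 < #B := card_pos.2 ⟨k, hk⟩
  obtain ⟨c, hc⟩ := heven
  have hpair : #({k, -k} : Finset α) ≤ 2 := card_le_two
  exact hne (eq_of_subset_of_card_le hsub (by omega))

end Finset

theorem mem_pmSet_of_mem_Icc {m : ℕ} {k : ℤ} (hk : k ∈ Finset.Icc 1 (2 * (m : ℤ))) :
    k ∈ pmSet m := by
  simp only [pmSet, Finset.mem_erase, Finset.mem_Icc] at hk ⊢
  omega

theorem abs_mem_Icc_of_mem_pmSet {m : ℕ} {y : ℤ} (hy : y ∈ pmSet m) :
    |y| ∈ Finset.Icc 1 (2 * (m : ℤ)) := by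
  simp only [pmSet, Finset.mem_erase, Finset.mem_Icc] at hy ⊢
  constructor
  · exact Int.one_le_abs hy.1
  · exact abs_le.2 hy.2

theorem exists_edgeAdj_ne {m : ℕ} (θ : Finpartition (pmSet m))
    (heven : ∀ B ∈ θ.parts, Even B.card) (hno : ∀ k : ℤ, ({k, -k} : Finset ℤ) ∉ θ.parts)
    {k : ℤ} (hk : k ∈ Finset.Icc 1 (2 * (m : ℤ))) :
    ∃ l ∈ Finset.Icc 1 (2 * (m : ℤ)), l ≠ k ∧ edgeAdj θ k l := by
  obtain ⟨B, hB, hkB⟩ := θ.exists_mem (mem_pmSet_of_mem_Icc hk)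
  obtain ⟨y, hyB, hyk, hynk⟩ := Finset.exists_mem_ne_ne_neg_of_even_card hkB (heven B hB)
    fun h => hno k (h ▸ hB)
  have hk0 : 0 ≤ k := by simp only [Finset.mem_Icc] at hk; omega
  refine ⟨|y|, abs_mem_Icc_of_mem_pmSet (θ.le hB hyB), ?_, B, hB, Or.inl hkB, ?_⟩
  · rw [Ne, abs_eq hk0]
    exact not_or.2 ⟨hyk, hynk⟩
  · rcases abs_choice y with h | h <;> rw [h] <;> simp [hyB]

theorem stmt0_general (m : ℕ) (θ : Finpartition (pmSet m))
    (heven : ∀ B ∈ θ.parts, Even B.card)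
    (hno : ∀ k : ℤ, ({k, -k} : Finset ℤ) ∉ θ.parts) :
    (∀ k ∈ Finset.Icc (1 : ℤ) (2 * (m : ℤ)), ∃ l ∈ Finset.Icc (1 : ℤ) (2 * (m : ℤ)),
        l ≠ k ∧ Relation.EqvGen (edgeAdj θ) k l) ∧
    ((Finset.Icc (1 : ℤ) (2 * (m : ℤ))).image (fun k =>
        (Finset.Icc (1 : ℤ) (2 * (m : ℤ))).filter
          (fun l => Relation.EqvGen (edgeAdj θ) k l))).card ≤ m := by
  have hcomp : ∀ k ∈ Finset.Icc (1 : ℤ) (2 * (m : ℤ)), ∃ l ∈ Finset.Icc (1 : ℤ) (2 * (m : ℤ)),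
      l ≠ k ∧ Relation.EqvGen (edgeAdj θ) k l := fun k hk =>
    (exists_edgeAdj_ne θ heven hno hk).imp fun l ⟨hl, hlk, hadj⟩ =>
      ⟨hl, hlk, Relation.EqvGen.rel _ _ hadj⟩
  refine ⟨hcomp, ?_⟩
  have hcount := Finset.two_mul_card_image_filter_le_card
    (Relation.EqvGen.is_equivalence (edgeAdj θ)) _ hcomp
  rw [Int.card_Icc] at hcount
  exact Nat.le_of_mul_le_mul_left (hcount.trans_eq (by omega)) two_pos

/-- Every connected component of `G_θ` contains at least two edges, and consequently
the number of connected components of `G_θ` is at most `m`. -/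
theorem stmt0 (m : ℕ) (hm : 1 ≤ m) (θ : Finpartition (pmSet m))
    (heven : ∀ B ∈ θ.parts, Even B.card)
    (hno : ∀ k : ℤ, ({k, -k} : Finset ℤ) ∉ θ.parts) :
    (∀ k ∈ Finset.Icc (1 : ℤ) (2 * (m : ℤ)), ∃ l ∈ Finset.Icc (1 : ℤ) (2 * (m : ℤ)),
        l ≠ k ∧ Relation.EqvGen (edgeAdj θ) k l) ∧
    ((Finset.Icc (1 : ℤ) (2 * (m : ℤ))).image (fun k =>
        (Finset.Icc (1 : ℤ) (2 * (m : ℤ))).filter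
          (fun l => Relation.EqvGen (edgeAdj θ) k l))).card ≤ m :=
  stmt0_general m θ heven hno
end

section
/- Let m ≥ 1 and let θ be an even partition of [±2m] with no block of the form {k,-k}. If the number of connected components of the graph G_θ equals m (the maximal possible value), then every connected component of G_θ has exactly two edges. -/
open scoped Classical

/-!
Every edge `k` of `G_θ` shares an endpoint with a second edge: the block of `+k` has even size
and is not `{k, -k}`, so it contains some `x ≠ ±k`, and the edge `|x|` meets it. Hence every
connected component has at least two of the `2m` edges, and if there are `m` components the
count forces each of them to have exactly two.
-/

open Finset

theorem Finset.card_fiber_eq_of_card_eq_mul {α β : Type*} [DecidableEq β] {s : Finset α}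
    {f : α → β} {n : ℕ} (hle : ∀ a ∈ s, n ≤ #{x ∈ s | f x = f a})
    (hcard : #s = n * #(s.image f)) :
    ∀ a ∈ s, #{x ∈ s | f x = f a} = n := by
  have hle' : ∀ b ∈ s.image f, n ≤ #{x ∈ s | f x = b} := by
    simpa only [forall_mem_image] using hle
  have hsum : ∑ _b ∈ s.image f, n = ∑ b ∈ s.image f, #{x ∈ s | f x = b} := by
    rw [← card_eq_sum_card_image, hcard, sum_const, smul_eq_mul, mul_comm]
  intro a ha
  exact ((sum_eq_sum_iff_of_le hle').1 hsum (f a) (mem_image_of_mem f ha)).symm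

theorem Finset.filter_filter_eq_filter_of_equivalence {α : Type*} [DecidableEq α]
    {r : α → α → Prop} (hr : Equivalence r) {s : Finset α} {k : α} (hk : k ∈ s) :
    {a ∈ s | {x ∈ s | r a x} = {x ∈ s | r k x}} = {x ∈ s | r k x} := by
  ext a
  simp only [mem_filter, and_congr_right_iff]
  intro ha
  constructor
  · intro h
    have hk' : k ∈ {x ∈ s | r a x} := h ▸ mem_filter.2 ⟨hk, hr.refl k⟩
    exact hr.symm (mem_filter.1 hk').2
  · intro hka
    ext x
    simp only [mem_filter, and_congr_right_iff]
    exact fun _ => ⟨hr.trans hka, hr.trans (hr.symm hka)⟩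

theorem Finset.exists_mem_ne_ne_of_even_card {α : Type*} [DecidableEq α] {B : Finset α}
    (heven : Even #B) {k k' : α} (hk : k ∈ B) (hne : B ≠ {k, k'}) :
    ∃ x ∈ B, x ≠ k ∧ x ≠ k' := by
  by_contra! h
  have hsub : B ⊆ {k, k'} := fun x hx => by
    by_cases hxk : x = k
    · simp [hxk]
    · simp [h x hx hxk]
  have hpos : 0 < #B := card_pos.2 ⟨k, hk⟩
  have htwo : #({k, k'} : Finset α) ≤ #B := by
    obtain ⟨r, hr⟩ := heven
    have := card_le_card hsub
    have := card_le_two (a := k) (b := k')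
    omega
  exact hne (eq_of_subset_of_card_le hsub htwo)

theorem exists_ne_edgeAdj {m : ℕ} (θ : Finpartition (pmSet m))
    (heven : ∀ B ∈ θ.parts, Even B.card)
    (hno : ∀ k : ℤ, ({k, -k} : Finset ℤ) ∉ θ.parts)
    {k : ℤ} (hk : k ∈ Icc (1 : ℤ) (2 * (m : ℤ))) :
    ∃ l ∈ Icc (1 : ℤ) (2 * (m : ℤ)), l ≠ k ∧ edgeAdj θ k l := by
  rw [mem_Icc] at hk
  have hkpm : k ∈ pmSet m := by
    simp only [pmSet, mem_erase, mem_Icc]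
    omega
  obtain ⟨B, hB, hkB⟩ := θ.exists_mem hkpm
  obtain ⟨x, hxB, hxk, hxnk⟩ :=
    exists_mem_ne_ne_of_even_card (heven B hB) hkB (fun h => hno k (h ▸ hB))
  have hxpm : x ∈ pmSet m := θ.le hB hxB
  simp only [pmSet, mem_erase, mem_Icc] at hxpm
  rcases le_or_gt 0 x with hx0 | hx0
  · exact ⟨x, mem_Icc.2 (by omega), hxk, B, hB, Or.inl hkB, Or.inl hxB⟩
  · refine ⟨-x, mem_Icc.2 (by omega), by omega, B, hB, Or.inl hkB, Or.inr ?_⟩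
    rwa [neg_neg]

theorem stmt1_general (m : ℕ) (θ : Finpartition (pmSet m))
    (heven : ∀ B ∈ θ.parts, Even B.card)
    (hno : ∀ k : ℤ, ({k, -k} : Finset ℤ) ∉ θ.parts)
    (hmax : ((Finset.Icc (1 : ℤ) (2 * (m : ℤ))).image (fun k =>
        (Finset.Icc (1 : ℤ) (2 * (m : ℤ))).filter
          (fun l => Relation.EqvGen (edgeAdj θ) k l))).card = m) :
    ∀ k ∈ Finset.Icc (1 : ℤ) (2 * (m : ℤ)),
      ((Finset.Icc (1 : ℤ) (2 * (m : ℤ))).filter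
        (fun l => Relation.EqvGen (edgeAdj θ) k l)).card = 2 := by
  set S := Icc (1 : ℤ) (2 * (m : ℤ))
  set C : ℤ → Finset ℤ := fun k => {l ∈ S | Relation.EqvGen (edgeAdj θ) k l}
  have hr := Relation.EqvGen.is_equivalence (edgeAdj θ)
  have hclass_two_le : ∀ k ∈ S, 2 ≤ #(C k) := by
    intro k hk
    obtain ⟨l, hl, hlk, hadj⟩ := exists_ne_edgeAdj θ heven hno hk
    calc 2 = #({l, k} : Finset ℤ) := (card_pair hlk).symm
      _ ≤ #(C k) := card_le_card (insert_subset (mem_filter.2 ⟨hl, .rel _ _ hadj⟩)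
          (singleton_subset_iff.2 (mem_filter.2 ⟨hk, hr.refl k⟩)))
  have hS : #S = 2 * #(S.image C) := by
    rw [hmax, Int.card_Icc]
    omega
  have hfiber : ∀ a ∈ S, {x ∈ S | C x = C a} = C a :=
    fun a ha => filter_filter_eq_filter_of_equivalence hr ha
  intro k hk
  change #(C k) = 2
  rw [← hfiber k hk]
  exact card_fiber_eq_of_card_eq_mul (fun a ha => (hfiber a ha).symm ▸ hclass_two_le a ha) hS k hk

/-- If `θ` is an even partition of `[±2m]` with no block `{k, -k}` and the graph `G_θ` has
exactly `m` connected components, then every connected component of `G_θ` has exactly two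
edges. -/
theorem stmt1 (m : ℕ) (hm : 1 ≤ m) (θ : Finpartition (pmSet m))
    (heven : ∀ B ∈ θ.parts, Even B.card)
    (hno : ∀ k : ℤ, ({k, -k} : Finset ℤ) ∉ θ.parts)
    (hmax : ((Finset.Icc (1 : ℤ) (2 * (m : ℤ))).image (fun k =>
        (Finset.Icc (1 : ℤ) (2 * (m : ℤ))).filter
          (fun l => Relation.EqvGen (edgeAdj θ) k l))).card = m) :
    ∀ k ∈ Finset.Icc (1 : ℤ) (2 * (m : ℤ)),
      ((Finset.Icc (1 : ℤ) (2 * (m : ℤ))).filter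
        (fun l => Relation.EqvGen (edgeAdj θ) k l)).card = 2 :=
  stmt1_general m θ heven hno hmax
end

section
/- Let m₁, m₂ ≥ 1 with m₁ = m₂, m = 2m₁, and let σ be the permutation of [±2m] with cycles (−1,1,...,−2m₁,2m₁)(−2m₁−1,2m₁+1,...,−2m₁−2m₂,2m₁+2m₂). For each l ∈ {2m₁+1,...,2m₁+2m₂}, the collection θ_l = { {σ^t(−1), σ^{−t−1}(−l)} : t ≥ 0 } is a pairing (perfect matching) of [±2m], and the map l ↦ θ_l is injective; hence the set P₁ = {θ_l : 2m₁+1 ≤ l ≤ 2m₁+2m₂} has cardinality 2m₁. -/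
/-- `σ` is the permutation of `ℤ` with cycle decomposition
`(−1,1,−2,2,…,−2m₁,2m₁)(−2m₁−1,2m₁+1,…,−2m₁−2m₂,2m₁+2m₂)`, fixing all other points. -/
def IsCycleSigma (m₁ m₂ : ℕ) (σ : Equiv.Perm ℤ) : Prop :=
  (∀ k : ℤ, 1 ≤ k → k ≤ 2 * (m₁ : ℤ) → σ (-k) = k) ∧
  (∀ k : ℤ, 1 ≤ k → k < 2 * (m₁ : ℤ) → σ k = -(k + 1)) ∧
  σ (2 * (m₁ : ℤ)) = -1 ∧
  (∀ k : ℤ, 2 * (m₁ : ℤ) + 1 ≤ k → k ≤ 2 * (m₁ : ℤ) + 2 * (m₂ : ℤ) → σ (-k) = k) ∧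
  (∀ k : ℤ, 2 * (m₁ : ℤ) + 1 ≤ k → k < 2 * (m₁ : ℤ) + 2 * (m₂ : ℤ) → σ k = -(k + 1)) ∧
  σ (2 * (m₁ : ℤ) + 2 * (m₂ : ℤ)) = -(2 * (m₁ : ℤ) + 1) ∧
  (∀ x : ℤ, (x = 0 ∨ 2 * (m₁ : ℤ) + 2 * (m₂ : ℤ) < |x|) → σ x = x)


/-!
Since `m₁ = m₂`, both cycles of `σ` have length `4m₁`; parametrise each by `ZMod (4m₁)` so that
`σ` acts as `r ↦ r + 1`. If `−l` sits at position `a` of the second cycle, then `σ^t(−1)` and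
`σ^(−t−1)(−l)` sit at positions `t` and `a − 1 − t`, so `θ_l` is the graph of the bijection
`t ↦ a − 1 − t` from the first cycle onto the second. A graph of a bijection between disjoint
sets is a pairing of their union, and it determines the bijection, hence `a` and `l`.
-/

theorem Equiv.Perm.zpow_apply_of_apply_eq_add_one {α R : Type*} [AddCommGroupWithOne R]
    {σ : Equiv.Perm α} {c : R → α} (h : ∀ r, σ (c r) = c (r + 1)) (k : ℤ) (r : R) :
    (σ ^ k) (c r) = c (r + k) := by
  induction k using Int.induction_on generalizing r with
  | zero => simp
  | succ k ih =>
    rw [zpow_add_one, Equiv.Perm.mul_apply, h, ih]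
    congr 1
    push_cast
    abel
  | pred k ih =>
    have h_inv : σ⁻¹ (c r) = c (r - 1) := by
      rw [Equiv.Perm.inv_eq_iff_eq, h, sub_add_cancel]
    rw [zpow_sub_one, Equiv.Perm.mul_apply, h_inv, ih]
    congr 1
    push_cast
    abel

section Pairing

variable {R α : Type*} [DecidableEq α]

def IsPairing (P : Set (Finset α)) (s : Set α) : Prop :=
  (∀ B ∈ P, B.card = 2 ∧ (B : Set α) ⊆ s) ∧ ∀ x ∈ s, ∃! B, B ∈ P ∧ x ∈ B

def graphPairing (u w : R → α) : Set (Finset α) :=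
  Set.range fun t => ({u t, w t} : Finset α)

variable {u w w' : R → α}

theorem isPairing_graphPairing (hu : Function.Injective u) (hw : Function.Injective w)
    (hdisj : ∀ s t, u s ≠ w t) : IsPairing (graphPairing u w) (Set.range u ∪ Set.range w) := by
  have hmem (x : α) (t : R) : x ∈ ({u t, w t} : Finset α) ↔ x = u t ∨ x = w t := by simp
  refine ⟨?_, ?_⟩
  · rintro _ ⟨t, rfl⟩
    refine ⟨Finset.card_pair (hdisj t t), fun x hx => ?_⟩
    rcases (hmem x t).mp hx with rfl | rfl
    exacts [Or.inl ⟨t, rfl⟩, Or.inr ⟨t, rfl⟩]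
  · rintro _ (⟨s, rfl⟩ | ⟨s, rfl⟩)
    · refine ⟨{u s, w s}, ⟨⟨s, rfl⟩, (hmem _ s).mpr (Or.inl rfl)⟩, ?_⟩
      rintro _ ⟨⟨t, rfl⟩, hs⟩
      rcases (hmem _ t).mp hs with h | h
      · rw [hu h]
      · exact absurd h (hdisj s t)
    · refine ⟨{u s, w s}, ⟨⟨s, rfl⟩, (hmem _ s).mpr (Or.inr rfl)⟩, ?_⟩
      rintro _ ⟨⟨t, rfl⟩, hs⟩
      rcases (hmem _ t).mp hs with h | h
      · exact absurd h.symm (hdisj t s)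
      · rw [hw h]

theorem eq_of_graphPairing_eq (hu : Function.Injective u) (hdisj : ∀ s t, u s ≠ w t)
    (hdisj' : ∀ s t, u s ≠ w' t) (h : graphPairing u w = graphPairing u w') : w = w' := by
  funext t
  obtain ⟨s, hs⟩ : {u t, w t} ∈ graphPairing u w' := h ▸ ⟨t, rfl⟩
  change ({u s, w' s} : Finset α) = {u t, w t} at hs
  have hu_mem : u t ∈ ({u s, w' s} : Finset α) := hs ▸ Finset.mem_insert_self _ _
  have hw_mem : w t ∈ ({u s, w' s} : Finset α) :=
    hs ▸ Finset.mem_insert_of_mem (Finset.mem_singleton_self _)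
  simp only [Finset.mem_insert, Finset.mem_singleton] at hu_mem hw_mem
  obtain rfl : t = s := hu (hu_mem.resolve_right (hdisj' t s))
  exact hw_mem.resolve_left (hdisj t t).symm

theorem setOf_pair_zpow_eq_graphPairing [AddCommGroupWithOne R] {σ : Equiv.Perm α}
    {c₁ c₂ : R → α} (h₁ : ∀ r, σ (c₁ r) = c₁ (r + 1)) (h₂ : ∀ r, σ (c₂ r) = c₂ (r + 1))
    (hR : Function.Surjective (Nat.cast : ℕ → R)) {x y : α} {a : R} (hx : c₁ 0 = x)
    (hy : c₂ a = y) :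
    {B | ∃ t : ℕ, B = ({(σ ^ (t : ℤ)) x, (σ ^ (-(t : ℤ) - 1)) y} : Finset α)} =
      graphPairing c₁ (fun t => c₂ (a - 1 - t)) := by
  have hblock (t : ℕ) : ({(σ ^ (t : ℤ)) x, (σ ^ (-(t : ℤ) - 1)) y} : Finset α) =
      {c₁ t, c₂ (a - 1 - t)} := by
    rw [← hx, ← hy, Equiv.Perm.zpow_apply_of_apply_eq_add_one h₁,
      Equiv.Perm.zpow_apply_of_apply_eq_add_one h₂]
    push_cast
    congr 3 <;> abel
  ext B
  simp only [Set.mem_ofPred_eq, hblock, graphPairing, hR.exists, Set.mem_range, eq_comm]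

end Pairing

section SignedCycle

variable (b n : ℕ)

/-- `r ↦ signedCycle b n r` runs through the cycle `(−(b+1), b+1, −(b+2), b+2, …, −(b+n), b+n)`. -/
def signedCycle (r : ZMod (2 * n)) : ℤ :=
  if Even r.val then -(b + r.val / 2 + 1 : ℤ) else b + r.val / 2 + 1

theorem signedCycle_natCast {v : ℕ} (hv : v < 2 * n) :
    signedCycle b n v = if Even v then -(b + v / 2 + 1 : ℤ) else b + v / 2 + 1 := by
  rw [signedCycle, ZMod.val_natCast_of_lt hv]

variable [NeZero n]

theorem signedCycle_injective : Function.Injective (signedCycle b n) := by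
  intro r s h
  apply ZMod.val_injective
  simp only [signedCycle, Nat.even_iff] at h
  split_ifs at h <;> omega

theorem range_signedCycle : Set.range (signedCycle b n) = {x : ℤ | b < |x| ∧ |x| ≤ b + n} := by
  ext x
  simp only [Set.mem_range, Set.mem_ofPred_eq]
  constructor
  · rintro ⟨r, rfl⟩
    have := r.val_lt
    simp only [signedCycle, Nat.even_iff, lt_abs, abs_le]
    split_ifs <;> omega
  · rintro ⟨hb, hbn⟩
    rcases abs_cases x with ⟨hx, -⟩ | ⟨hx, -⟩
    · refine ⟨((2 * (x - b - 1) + 1).toNat : ℕ), ?_⟩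
      rw [signedCycle_natCast b n (by omega)]
      simp only [Nat.even_iff]
      split_ifs <;> omega
    · refine ⟨((2 * (-x - b - 1)).toNat : ℕ), ?_⟩
      rw [signedCycle_natCast b n (by omega)]
      simp only [Nat.even_iff]
      split_ifs <;> omega

theorem signedCycle_ne_of_add_le {b' n' : ℕ} (h : b + n ≤ b') (r : ZMod (2 * n))
    (s : ZMod (2 * n')) : signedCycle b n r ≠ signedCycle b' n' s := by
  have := r.val_lt
  simp only [signedCycle, Nat.even_iff]
  split_ifs <;> omega

end SignedCycle

def HasSignedCycle (σ : Equiv.Perm ℤ) (b n : ℕ) : Prop :=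
  (∀ k : ℤ, b + 1 ≤ k → k ≤ b + n → σ (-k) = k) ∧
  (∀ k : ℤ, b + 1 ≤ k → k < b + n → σ k = -(k + 1)) ∧
  σ (b + n) = -(b + 1)

theorem HasSignedCycle.apply_signedCycle {σ : Equiv.Perm ℤ} {b n : ℕ} [NeZero n]
    (hσ : HasSignedCycle σ b n) (r : ZMod (2 * n)) :
    σ (signedCycle b n r) = signedCycle b n (r + 1) := by
  obtain ⟨hneg, hpos, hlast⟩ := hσ
  obtain ⟨v, hv, rfl⟩ : ∃ v < 2 * n, (v : ZMod (2 * n)) = r :=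
    ⟨r.val, r.val_lt, r.natCast_zmod_val⟩
  rw [signedCycle_natCast b n hv, ← Nat.cast_succ]
  rcases (Nat.succ_le_of_lt hv).lt_or_eq with hv' | hv'
  · rw [signedCycle_natCast b n hv']
    by_cases he : v % 2 = 0
    · rw [if_pos (Nat.even_iff.2 he), if_neg (by rw [Nat.even_iff]; omega),
        hneg _ (by omega) (by omega)]
      omega
    · rw [if_neg (by rw [Nat.even_iff]; omega), if_pos (by rw [Nat.even_iff]; omega),
        hpos _ (by omega) (by omega)]
      omega
  · rw [hv', ZMod.natCast_self, ← Nat.cast_zero, signedCycle_natCast b n (by omega),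
      if_neg (by rw [Nat.even_iff]; omega), if_pos ⟨0, rfl⟩,
      show (b : ℤ) + v / 2 + 1 = b + n by omega, hlast]
    simp

theorem IsCycleSigma.hasSignedCycle_fst {m₁ m₂ : ℕ} {σ : Equiv.Perm ℤ}
    (hσ : IsCycleSigma m₁ m₂ σ) : HasSignedCycle σ 0 (2 * m₁) := by
  obtain ⟨h₁, h₂, h₃, -⟩ := hσ
  exact ⟨by simpa using h₁, by simpa using h₂, by simpa using h₃⟩

theorem IsCycleSigma.hasSignedCycle_snd {m₁ m₂ : ℕ} {σ : Equiv.Perm ℤ}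
    (hσ : IsCycleSigma m₁ m₂ σ) : HasSignedCycle σ (2 * m₁) (2 * m₂) := by
  obtain ⟨-, -, -, h₁, h₂, h₃, -⟩ := hσ
  exact ⟨by simpa using h₁, by simpa using h₂, by simpa using h₃⟩

theorem coe_pmSet_add_self (m : ℕ) [NeZero m] : (pmSet (m + m) : Set ℤ) =
    Set.range (signedCycle 0 (2 * m)) ∪ Set.range (signedCycle (2 * m) (2 * m)) := by
  rw [range_signedCycle, range_signedCycle]
  ext x
  simp only [pmSet, Finset.coe_erase, Finset.coe_Icc, Set.mem_sdiff, Set.mem_Icc,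
    Set.mem_singleton_iff, Set.mem_union, Set.mem_ofPred_eq, lt_abs, abs_le]
  push_cast
  omega

theorem neg_mem_range_signedCycle (b n : ℕ) [NeZero n] {l : ℤ} (h₁ : b + 1 ≤ l)
    (h₂ : l ≤ b + n) : -l ∈ Set.range (signedCycle b n) := by
  rw [range_signedCycle, Set.mem_ofPred_eq, abs_neg, abs_of_pos (by omega)]
  omega

section SecondCycle

variable (m : ℕ)

/-- When `signedCycle (2m) (2m) a = −l`, this is `θ_l`. -/
def secondCyclePairing (a : ZMod (2 * (2 * m))) : Set (Finset ℤ) :=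
  graphPairing (signedCycle 0 (2 * m)) (fun t => signedCycle (2 * m) (2 * m) (a - 1 - t))

variable [NeZero m]

theorem isPairing_secondCyclePairing (a : ZMod (2 * (2 * m))) :
    IsPairing (secondCyclePairing m a) (pmSet (m + m)) := by
  have hrange : Set.range (fun t => signedCycle (2 * m) (2 * m) (a - 1 - t)) =
      Set.range (signedCycle (2 * m) (2 * m)) :=
    (Equiv.subLeft (a - 1)).surjective.range_comp (signedCycle (2 * m) (2 * m))
  rw [coe_pmSet_add_self, ← hrange]
  exact isPairing_graphPairing (signedCycle_injective _ _)
    ((signedCycle_injective _ _).comp (sub_right_injective (b := a - 1)))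
    fun _ _ => signedCycle_ne_of_add_le _ _ (by omega) _ _

theorem secondCyclePairing_injective : Function.Injective (secondCyclePairing m) := by
  intro a a' h
  have hdisj (a : ZMod (2 * (2 * m))) (s t) :
      signedCycle 0 (2 * m) s ≠ signedCycle (2 * m) (2 * m) (a - 1 - t) :=
    signedCycle_ne_of_add_le _ _ (by omega) _ _
  have h₀ := congrFun (eq_of_graphPairing_eq (signedCycle_injective _ _) (hdisj a) (hdisj a') h) 0
  simpa using signedCycle_injective _ _ h₀

theorem IsCycleSigma.setOf_pair_zpow_eq_secondCyclePairing {σ : Equiv.Perm ℤ}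
    (hσ : IsCycleSigma m m σ) {l : ℤ} {a : ZMod (2 * (2 * m))}
    (ha : signedCycle (2 * m) (2 * m) a = -l) :
    {B | ∃ t : ℕ, B = ({(σ ^ (t : ℤ)) (-1), (σ ^ (-(t : ℤ) - 1)) (-l)} : Finset ℤ)} =
      secondCyclePairing m a :=
  setOf_pair_zpow_eq_graphPairing hσ.hasSignedCycle_fst.apply_signedCycle
    hσ.hasSignedCycle_snd.apply_signedCycle ZMod.natCast_zmod_surjective
    (by simp [signedCycle]) ha

end SecondCycle

theorem stmt6_general (m₁ m₂ : ℕ) (hm₁ : 1 ≤ m₁) (hEq : m₁ = m₂)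
    (σ : Equiv.Perm ℤ) (hσ : IsCycleSigma m₁ m₂ σ)
    (θfun : ℤ → Set (Finset ℤ))
    (hθ : ∀ l : ℤ, θfun l =
      {B | ∃ t : ℕ, B = ({(σ ^ (t : ℤ)) (-1), (σ ^ (-(t : ℤ) - 1)) (-l)} : Finset ℤ)}) :
    (∀ l : ℤ, 2 * (m₁ : ℤ) + 1 ≤ l → l ≤ 2 * (m₁ : ℤ) + 2 * (m₂ : ℤ) →
      (∀ B ∈ θfun l, B.card = 2 ∧ (B : Set ℤ) ⊆ (pmSet (m₁ + m₂) : Set ℤ)) ∧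
      (∀ x ∈ pmSet (m₁ + m₂), ∃! B, B ∈ θfun l ∧ x ∈ B)) ∧
    Set.InjOn θfun (Set.Icc (2 * (m₁ : ℤ) + 1) (2 * (m₁ : ℤ) + 2 * (m₂ : ℤ))) ∧
    (θfun '' Set.Icc (2 * (m₁ : ℤ) + 1) (2 * (m₁ : ℤ) + 2 * (m₂ : ℤ))).ncard = 2 * m₁ := by
  subst hEq
  have : NeZero m₁ := ⟨by omega⟩
  have hθ_eq (l : ℤ) (hl : l ∈ Set.Icc (2 * (m₁ : ℤ) + 1) (2 * m₁ + 2 * m₁)) :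
      ∃ a, signedCycle (2 * m₁) (2 * m₁) a = -l ∧ θfun l = secondCyclePairing m₁ a := by
    obtain ⟨a, ha⟩ := neg_mem_range_signedCycle (2 * m₁) (2 * m₁) (l := l)
      (by push_cast; exact hl.1) (by push_cast; exact hl.2)
    exact ⟨a, ha, (hθ l).trans (hσ.setOf_pair_zpow_eq_secondCyclePairing m₁ ha)⟩
  have hinj : Set.InjOn θfun (Set.Icc (2 * (m₁ : ℤ) + 1) (2 * m₁ + 2 * m₁)) := by
    intro l hl l' hl' h
    obtain ⟨a, ha, hθl⟩ := hθ_eq l hl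
    obtain ⟨a', ha', hθl'⟩ := hθ_eq l' hl'
    rw [hθl, hθl'] at h
    rw [← neg_inj, ← ha, ← ha', secondCyclePairing_injective m₁ h]
  refine ⟨fun l h₁ h₂ => ?_, hinj, ?_⟩
  · obtain ⟨a, -, hθl⟩ := hθ_eq l ⟨h₁, h₂⟩
    rw [hθl]
    exact isPairing_secondCyclePairing m₁ a
  · rw [hinj.ncard_image, ← Finset.coe_Icc, Set.ncard_coe_finset, Int.card_Icc]
    omega

/-- For `m₁ = m₂` and `l` in the second cycle, the family
`θ_l = { {σ^t(−1), σ^{−t−1}(−l)} : t ≥ 0 }` is a pairing of `[±2m]`, the map `l ↦ θ_l` is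
injective, and the set `P₁ = {θ_l}` has cardinality `2m₁`. -/
theorem stmt6 (m₁ m₂ : ℕ) (hm₁ : 1 ≤ m₁) (hm₂ : 1 ≤ m₂) (hEq : m₁ = m₂)
    (σ : Equiv.Perm ℤ) (hσ : IsCycleSigma m₁ m₂ σ)
    (θfun : ℤ → Set (Finset ℤ))
    (hθ : ∀ l : ℤ, θfun l =
      {B | ∃ t : ℕ, B = ({(σ ^ (t : ℤ)) (-1), (σ ^ (-(t : ℤ) - 1)) (-l)} : Finset ℤ)}) :
    (∀ l : ℤ, 2 * (m₁ : ℤ) + 1 ≤ l → l ≤ 2 * (m₁ : ℤ) + 2 * (m₂ : ℤ) →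
      (∀ B ∈ θfun l, B.card = 2 ∧ (B : Set ℤ) ⊆ (pmSet (m₁ + m₂) : Set ℤ)) ∧
      (∀ x ∈ pmSet (m₁ + m₂), ∃! B, B ∈ θfun l ∧ x ∈ B)) ∧
    Set.InjOn θfun (Set.Icc (2 * (m₁ : ℤ) + 1) (2 * (m₁ : ℤ) + 2 * (m₂ : ℤ))) ∧
    (θfun '' Set.Icc (2 * (m₁ : ℤ) + 1) (2 * (m₁ : ℤ) + 2 * (m₂ : ℤ))).ncard = 2 * m₁ :=
  stmt6_general m₁ m₂ hm₁ hEq σ hσ θfun hθ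
end

section
/- Let m₁, m₂ ≥ 1, m = m₁ + m₂, and let σ be the permutation of [±2m] with cycles (−1,1,...,−2m₁,2m₁)(−2m₁−1,2m₁+1,...,−2m₁−2m₂,2m₁+2m₂). For each l₁ ∈ [2m₁], the pairing θ(l₁) = { {σ^t(−l₁), σ^{−t−1}(−l₁)} : t ≥ 0 } of [±2m₁] satisfies θ(l₁) = θ(l₁ + m₁) (indices mod 2m₁), and the pairings θ(1), ..., θ(m₁) are pairwise distinct; hence there are exactly m₁ distinct such pairings. -/
/-! Reading the first cycle of `σ` from `-1` identifies `[±2m₁]` with `ZMod (4m₁)`, and in these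
coordinates `σ` is `i ↦ i + 1` and `-l` sits at `2l - 2`. The block `{σ^t(-l), σ^{-t-1}(-l)}` then
becomes `{i, c - i}` with `c = 4l - 5`, so `θ(l)` is the orbit partition of the reflection
`i ↦ c - i`, which has no fixed point because `c` is odd. A reflection determines its centre `c`,
hence `θ(l) = θ(l')` iff `4l ≡ 4l' [ZMOD 4m₁]`, i.e. `l ≡ l' [ZMOD m₁]`. -/

open Function Equiv

section ReflectionPairing

variable {α G : Type*} [DecidableEq α] [AddCommGroup G] {f : G → α}

def reflectionPairing (f : G → α) (c : G) : Set (Finset α) :=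
  {B | ∃ i, B = {f i, f (c - i)}}

lemma card_eq_two_of_mem_reflectionPairing (hf : Injective f) {c : G} (hc : ∀ i, c ≠ i + i)
    {B : Finset α} (hB : B ∈ reflectionPairing f c) : B.card = 2 := by
  obtain ⟨i, rfl⟩ := hB
  refine Finset.card_pair fun h => hc i ?_
  exact (eq_sub_iff_add_eq.mp (hf h)).symm

lemma coe_subset_range_of_mem_reflectionPairing {c : G} {B : Finset α}
    (hB : B ∈ reflectionPairing f c) : (B : Set α) ⊆ Set.range f := by
  obtain ⟨i, rfl⟩ := hB
  simp [Set.insert_subset_iff]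

lemma existsUnique_mem_reflectionPairing (hf : Injective f) (c i : G) :
    ∃! B, B ∈ reflectionPairing f c ∧ f i ∈ B := by
  refine ⟨{f i, f (c - i)}, ⟨⟨i, rfl⟩, Finset.mem_insert_self _ _⟩, ?_⟩
  rintro _ ⟨⟨j, rfl⟩, hi⟩
  rcases Finset.mem_insert.mp hi with h | h
  · rw [hf h]
  · rw [hf (Finset.mem_singleton.mp h), sub_sub_cancel, Finset.pair_comm]

lemma reflectionPairing_injective (hf : Injective f) : Injective (reflectionPairing f) := by
  intro c d h
  obtain ⟨i, hi⟩ : {f 0, f c} ∈ reflectionPairing f d := h ▸ ⟨0, by rw [sub_zero]⟩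
  have hi' := congrArg ((↑) : Finset α → Set α) hi
  simp only [Finset.coe_pair, Set.pair_eq_pair_iff, hf.eq_iff] at hi'
  rcases hi' with ⟨rfl, h⟩ | ⟨h, rfl⟩
  · rwa [sub_zero] at h
  · exact (sub_eq_zero.mp h.symm).symm

end ReflectionPairing

lemma intCast_ne_add_self_of_odd {n : ℕ} (hn : 2 ∣ n) {a : ℤ} (ha : Odd a) (i : ZMod n) :
    (a : ZMod n) ≠ i + i := by
  intro h
  have h2 := congrArg (ZMod.castHom hn (ZMod 2)) h
  rw [map_intCast, map_add, CharTwo.add_self_eq_zero, ZMod.intCast_zmod_eq_zero_iff_dvd] at h2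
  exact Int.not_even_iff_odd.mpr ha (even_iff_two_dvd.mpr (by exact_mod_cast h2))

section OrbitPairing

variable {α : Type*} {σ : Perm α}

lemma zpow_apply_eq_of_apply_eq_add_one {R : Type*} [AddCommGroupWithOne R] {f : R → α}
    (h : ∀ i, σ (f i) = f (i + 1)) (t : ℤ) (i : R) : (σ ^ t) (f i) = f (i + t) := by
  induction t using Int.induction_on generalizing i with
  | zero => simp
  | succ k ih => rw [zpow_add_one, Perm.mul_apply, h, ih]; push_cast; abel_nf
  | pred k ih =>
    have hinv : σ⁻¹ (f i) = f (i - 1) := by rw [Perm.inv_eq_iff_eq, h, sub_add_cancel]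
    rw [zpow_sub_one, Perm.mul_apply, hinv, ih]; push_cast; abel_nf

variable [DecidableEq α]

def orbitPairing (σ : Perm α) (x : α) : Set (Finset α) :=
  {B | ∃ t : ℕ, B = {(σ ^ (t : ℤ)) x, (σ ^ (-(t : ℤ) - 1)) x}}

lemma orbitPairing_eq_reflectionPairing {n : ℕ} [NeZero n] {f : ZMod n → α}
    (h : ∀ i, σ (f i) = f (i + 1)) (p : ZMod n) :
    orbitPairing σ (f p) = reflectionPairing f (2 * p - 1) := by
  ext B
  simp only [orbitPairing, reflectionPairing, zpow_apply_eq_of_apply_eq_add_one h,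
    Set.mem_ofPred_eq]
  constructor
  · rintro ⟨t, rfl⟩
    exact ⟨p + t, by push_cast; ring_nf⟩
  · rintro ⟨i, rfl⟩
    obtain ⟨t, ht⟩ := ZMod.natCast_zmod_surjective (i - p)
    exact ⟨t, by push_cast; rw [ht]; ring_nf⟩

end OrbitPairing

section FirstCycle

-- The `i`-th entry of the cycle `(-1, 1, -2, 2, …, -2m, 2m)`.
def firstCycle (m : ℕ) (i : ZMod (4 * m)) : ℤ :=
  if i.val % 2 = 0 then -((i.val / 2 + 1 : ℕ) : ℤ) else ((i.val / 2 + 1 : ℕ) : ℤ)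

variable {m : ℕ}

lemma firstCycle_natCast {k : ℕ} (hk : k < 4 * m) :
    firstCycle m k = if k % 2 = 0 then -((k / 2 + 1 : ℕ) : ℤ) else ((k / 2 + 1 : ℕ) : ℤ) := by
  rw [firstCycle, ZMod.val_natCast_of_lt hk]

lemma neg_eq_firstCycle {l : ℤ} (h1 : 1 ≤ l) (h2 : l ≤ 2 * m) :
    -l = firstCycle m (2 * l - 2) := by
  have hcast : ((2 * l - 2 : ℤ) : ZMod (4 * m)) = (((2 * l - 2).toNat : ℕ) : ZMod (4 * m)) := by
    rw [← Int.cast_natCast, Int.toNat_of_nonneg (by omega)]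
  push_cast at hcast
  rw [hcast, firstCycle_natCast (by omega)]
  split_ifs <;> omega

variable [NeZero m]

lemma firstCycle_injective : Injective (firstCycle m) := by
  intro i j h
  apply ZMod.val_injective
  unfold firstCycle at h
  split_ifs at h <;> omega

lemma range_firstCycle : Set.range (firstCycle m) = pmSet m := by
  ext x
  simp only [Set.mem_range, Finset.mem_coe, pmSet, Finset.mem_erase, Finset.mem_Icc]
  constructor
  · rintro ⟨i, rfl⟩
    have := ZMod.val_lt i
    unfold firstCycle
    split_ifs <;> omega
  · rintro ⟨hx0, hx⟩
    rcases hx0.lt_or_gt with hneg | hpos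
    · exact ⟨((2 * (-x - 1)).toNat : ℕ), by rw [firstCycle_natCast (by omega)]; split_ifs <;> omega⟩
    · exact ⟨((2 * x - 1).toNat : ℕ), by rw [firstCycle_natCast (by omega)]; split_ifs <;> omega⟩

lemma apply_firstCycle {m₂ : ℕ} {σ : Perm ℤ} (hσ : IsCycleSigma m m₂ σ) (i : ZMod (4 * m)) :
    σ (firstCycle m i) = firstCycle m (i + 1) := by
  obtain ⟨hneg, hpos, hlast, -⟩ := hσ
  obtain ⟨k, hk, rfl⟩ : ∃ k < 4 * m, (k : ZMod (4 * m)) = i :=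
    ⟨i.val, ZMod.val_lt i, ZMod.natCast_zmod_val i⟩
  rw [← Nat.cast_add_one, firstCycle_natCast hk]
  rcases (show k + 1 ≤ 4 * m from hk).lt_or_eq with hk1 | hk1
  · rw [firstCycle_natCast hk1]
    split_ifs
    · omega
    · rw [hneg _ (by omega) (by omega)]; omega
    · rw [hpos _ (by omega) (by omega)]; omega
    · omega
  · rw [hk1, ZMod.natCast_self, show firstCycle m 0 = -1 by simp [firstCycle], if_neg (by omega),
      show ((k / 2 + 1 : ℕ) : ℤ) = 2 * m by omega, hlast]

end FirstCycle

section NegOrbitPairing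

variable {m m₂ : ℕ} [NeZero m] {σ : Perm ℤ} {l : ℤ}

lemma orbitPairing_neg_eq (hσ : IsCycleSigma m m₂ σ) (h1 : 1 ≤ l) (h2 : l ≤ 2 * m) :
    orbitPairing σ (-l) = reflectionPairing (firstCycle m) ((4 * l - 5 : ℤ) : ZMod (4 * m)) := by
  rw [neg_eq_firstCycle h1 h2, orbitPairing_eq_reflectionPairing (apply_firstCycle hσ)]
  push_cast
  ring_nf

lemma orbitPairing_neg_eq_iff (hσ : IsCycleSigma m m₂ σ) {l' : ℤ}
    (hl : l ∈ Set.Icc 1 (2 * (m : ℤ))) (hl' : l' ∈ Set.Icc 1 (2 * (m : ℤ))) :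
    orbitPairing σ (-l) = orbitPairing σ (-l') ↔ (m : ℤ) ∣ l - l' := by
  rw [orbitPairing_neg_eq hσ hl.1 hl.2, orbitPairing_neg_eq hσ hl'.1 hl'.2,
    (reflectionPairing_injective firstCycle_injective).eq_iff,
    ZMod.intCast_eq_intCast_iff_dvd_sub, dvd_sub_comm, Nat.cast_mul, Nat.cast_ofNat,
    show 4 * l - 5 - (4 * l' - 5) = 4 * (l - l') by ring,
    mul_dvd_mul_iff_left (by norm_num : (4 : ℤ) ≠ 0)]

lemma card_eq_two_of_mem_orbitPairing_neg (hσ : IsCycleSigma m m₂ σ) (h1 : 1 ≤ l) (h2 : l ≤ 2 * m)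
    {B : Finset ℤ} (hB : B ∈ orbitPairing σ (-l)) : B.card = 2 := by
  rw [orbitPairing_neg_eq hσ h1 h2] at hB
  have hodd : Odd (4 * l - 5) := ⟨2 * l - 3, by ring⟩
  exact card_eq_two_of_mem_reflectionPairing firstCycle_injective
    (intCast_ne_add_self_of_odd (dvd_mul_of_dvd_left (by norm_num) _) hodd) hB

lemma coe_subset_pmSet_of_mem_orbitPairing_neg (hσ : IsCycleSigma m m₂ σ) (h1 : 1 ≤ l)
    (h2 : l ≤ 2 * m) {B : Finset ℤ} (hB : B ∈ orbitPairing σ (-l)) : (B : Set ℤ) ⊆ pmSet m := by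
  rw [orbitPairing_neg_eq hσ h1 h2] at hB
  exact range_firstCycle (m := m) ▸ coe_subset_range_of_mem_reflectionPairing hB

lemma existsUnique_mem_orbitPairing_neg (hσ : IsCycleSigma m m₂ σ) (h1 : 1 ≤ l) (h2 : l ≤ 2 * m)
    {x : ℤ} (hx : x ∈ pmSet m) :
    ∃! B, B ∈ orbitPairing σ (-l) ∧ x ∈ B := by
  obtain ⟨i, rfl⟩ := (Set.ext_iff.mp range_firstCycle x).mpr hx
  rw [orbitPairing_neg_eq hσ h1 h2]
  exact existsUnique_mem_reflectionPairing firstCycle_injective _ i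

end NegOrbitPairing

section PeriodicOnIcc

variable {β : Type*} {g : ℤ → β} {m : ℕ}

lemma injOn_Icc_of_eq_imp_dvd
    (hg : ∀ l ∈ Set.Icc (1 : ℤ) m, ∀ l' ∈ Set.Icc (1 : ℤ) m, g l = g l' → (m : ℤ) ∣ l - l') :
    Set.InjOn g (Set.Icc 1 m) := by
  intro l hl l' hl' h
  have := Int.eq_zero_of_abs_lt_dvd (hg l hl l' hl' h)
    (abs_lt.mpr ⟨by linarith [hl.1, hl'.2], by linarith [hl.2, hl'.1]⟩)
  linarith

lemma ncard_image_Icc_of_eq_iff_dvd (hm : 0 < m) {k : ℤ} (hk : 0 < k)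
    (hg : ∀ l ∈ Set.Icc (1 : ℤ) (k * m), ∀ l' ∈ Set.Icc (1 : ℤ) (k * m),
      g l = g l' ↔ (m : ℤ) ∣ l - l') :
    (g '' Set.Icc 1 (k * m)).ncard = m := by
  have hmk : (m : ℤ) ≤ k * m := le_mul_of_one_le_left (by positivity) hk
  have hsub : Set.Icc (1 : ℤ) m ⊆ Set.Icc 1 (k * m) := Set.Icc_subset_Icc le_rfl hmk
  have himage : g '' Set.Icc 1 (k * m) = g '' Set.Icc 1 m := by
    refine (Set.image_mono hsub).antisymm' ?_
    rintro _ ⟨l, hl, rfl⟩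
    have hr : (l - 1) % m + 1 ∈ Set.Icc (1 : ℤ) m :=
      ⟨by linarith [Int.emod_nonneg (l - 1) (by omega : (m : ℤ) ≠ 0)],
        by linarith [Int.emod_lt_of_pos (l - 1) (by omega : (0 : ℤ) < m)]⟩
    refine ⟨_, hr, (hg _ (hsub hr) l hl).mpr ⟨-((l - 1) / m), ?_⟩⟩
    linarith [Int.emod_add_mul_ediv (l - 1) m]
  have hinj : Set.InjOn g (Set.Icc 1 m) :=
    injOn_Icc_of_eq_imp_dvd fun l hl l' hl' => (hg l (hsub hl) l' (hsub hl')).mp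
  rw [himage, hinj.ncard_image, Set.ncard_eq_toFinset_card', Set.toFinset_Icc, Int.card_Icc]
  omega

end PeriodicOnIcc

theorem stmt7_general (m₁ m₂ : ℕ) (hm₁ : 1 ≤ m₁)
    (σ : Equiv.Perm ℤ) (hσ : IsCycleSigma m₁ m₂ σ)
    (θfun : ℤ → Set (Finset ℤ))
    (hθ : ∀ l : ℤ, θfun l =
      {B | ∃ t : ℕ, B = ({(σ ^ (t : ℤ)) (-l), (σ ^ (-(t : ℤ) - 1)) (-l)} : Finset ℤ)}) :
    (∀ l : ℤ, 1 ≤ l → l ≤ 2 * (m₁ : ℤ) →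
      ((∀ B ∈ θfun l, B.card = 2 ∧ (B : Set ℤ) ⊆ (pmSet m₁ : Set ℤ)) ∧
       (∀ x ∈ pmSet m₁, ∃! B, B ∈ θfun l ∧ x ∈ B)) ∧
      θfun l = θfun (if l + (m₁ : ℤ) ≤ 2 * (m₁ : ℤ) then l + m₁ else l - m₁)) ∧
    Set.InjOn θfun (Set.Icc (1 : ℤ) (m₁ : ℤ)) ∧
    (θfun '' Set.Icc (1 : ℤ) (2 * (m₁ : ℤ))).ncard = m₁ := by
  have : NeZero m₁ := ⟨by omega⟩
  have hθ' : θfun = fun l => orbitPairing σ (-l) := funext hθ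
  subst hθ'
  have hiff : ∀ l ∈ Set.Icc 1 (2 * (m₁ : ℤ)), ∀ l' ∈ Set.Icc 1 (2 * (m₁ : ℤ)),
      orbitPairing σ (-l) = orbitPairing σ (-l') ↔ (m₁ : ℤ) ∣ l - l' :=
    fun l hl l' hl' => orbitPairing_neg_eq_iff hσ hl hl'
  have hle : Set.Icc (1 : ℤ) m₁ ⊆ Set.Icc 1 (2 * m₁) := Set.Icc_subset_Icc le_rfl (by omega)
  refine ⟨fun l h1 h2 => ⟨⟨fun B hB => ⟨card_eq_two_of_mem_orbitPairing_neg hσ h1 h2 hB,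
    coe_subset_pmSet_of_mem_orbitPairing_neg hσ h1 h2 hB⟩,
    fun x hx => existsUnique_mem_orbitPairing_neg hσ h1 h2 hx⟩, ?_⟩,
    injOn_Icc_of_eq_imp_dvd fun l hl l' hl' => (hiff l (hle hl) l' (hle hl')).mp,
    ncard_image_Icc_of_eq_iff_dvd (by omega) two_pos hiff⟩
  split_ifs
  · exact (hiff l ⟨h1, h2⟩ _ ⟨by omega, by omega⟩).mpr ⟨-1, by ring⟩
  · exact (hiff l ⟨h1, h2⟩ _ ⟨by omega, by omega⟩).mpr ⟨1, by ring⟩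

/-- For each `l₁ ∈ [2m₁]`, `θ(l₁) = { {σ^t(−l₁), σ^{−t−1}(−l₁)} : t ≥ 0 }` is a pairing of
`[±2m₁]` with `θ(l₁) = θ(l₁ + m₁)` (indices mod `2m₁`), the pairings `θ(1), …, θ(m₁)` are
pairwise distinct, and there are exactly `m₁` distinct such pairings. -/
theorem stmt7 (m₁ m₂ : ℕ) (hm₁ : 1 ≤ m₁) (hm₂ : 1 ≤ m₂)
    (σ : Equiv.Perm ℤ) (hσ : IsCycleSigma m₁ m₂ σ)
    (θfun : ℤ → Set (Finset ℤ))
    (hθ : ∀ l : ℤ, θfun l =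
      {B | ∃ t : ℕ, B = ({(σ ^ (t : ℤ)) (-l), (σ ^ (-(t : ℤ) - 1)) (-l)} : Finset ℤ)}) :
    (∀ l : ℤ, 1 ≤ l → l ≤ 2 * (m₁ : ℤ) →
      ((∀ B ∈ θfun l, B.card = 2 ∧ (B : Set ℤ) ⊆ (pmSet m₁ : Set ℤ)) ∧
       (∀ x ∈ pmSet m₁, ∃! B, B ∈ θfun l ∧ x ∈ B)) ∧
      θfun l = θfun (if l + (m₁ : ℤ) ≤ 2 * (m₁ : ℤ) then l + m₁ else l - m₁)) ∧
    Set.InjOn θfun (Set.Icc (1 : ℤ) (m₁ : ℤ)) ∧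
    (θfun '' Set.Icc (1 : ℤ) (2 * (m₁ : ℤ))).ncard = m₁ :=
  stmt7_general m₁ m₂ hm₁ σ hσ θfun hθ
end

section
/- Let m₁ ≥ 1 and σ be the cycle (−1,1,−2,2,...,−2m₁,2m₁) on [±2m₁]. Let π be an even partition of [±2m₁] with all blocks of the form {−k,k,−l,l} or {k,−l}, and suppose for integers k_α ≤ k_β in [2m₁] that σ^{t+1}(k_α) ∼_π σ^{−t}(k_α) and σ^{t+1}(k_β) ∼_π σ^{−t}(k_β) for all t ≥ 0. Then k_β = k_α or k_β = k_α + m₁. -/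
/-- `σ` is the single cycle `(−1,1,−2,2,…,−2m₁,2m₁)` on `[±2m₁]`, fixing all other points. -/
def IsCycleSigma1 (m₁ : ℕ) (σ : Equiv.Perm ℤ) : Prop :=
  (∀ k : ℤ, 1 ≤ k → k ≤ 2 * (m₁ : ℤ) → σ (-k) = k) ∧
  (∀ k : ℤ, 1 ≤ k → k < 2 * (m₁ : ℤ) → σ k = -(k + 1)) ∧
  σ (2 * (m₁ : ℤ)) = -1 ∧
  (∀ x : ℤ, (x = 0 ∨ 2 * (m₁ : ℤ) < |x|) → σ x = x)

/-- The element at position `p` (read modulo `4m`) of the cycle `(−1,1,−2,2,…,−2m,2m)`,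
counting from `−1` at position `0`. -/
def cyclePos (m : ℕ) (p : ℤ) : ℤ :=
  if p % (4 * m) % 2 = 0 then -(p % (4 * m) / 2) - 1 else (p % (4 * m) + 1) / 2

section cyclePos

variable {m : ℕ} {p q : ℤ}

lemma cyclePos_congr (h : p ≡ q [ZMOD 4 * m]) : cyclePos m p = cyclePos m q := by
  unfold cyclePos; rw [h.eq]

lemma cyclePos_emod (p : ℤ) : cyclePos m (p % (4 * m)) = cyclePos m p :=
  cyclePos_congr (Int.mod_modEq p _)

lemma cyclePos_two_mul_sub_one {k : ℤ} (h1 : 1 ≤ k) (h2 : k ≤ 2 * m) :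
    cyclePos m (2 * k - 1) = k := by
  unfold cyclePos
  rw [Int.emod_eq_of_lt (a := 2 * k - 1) (by omega) (by omega), if_neg (by omega)]
  omega

lemma cyclePos_two_mul_sub_two {k : ℤ} (h1 : 1 ≤ k) (h2 : k ≤ 2 * m) :
    cyclePos m (2 * k - 2) = -k := by
  unfold cyclePos
  rw [Int.emod_eq_of_lt (a := 2 * k - 2) (by omega) (by omega), if_pos (by omega)]
  omega

lemma emod_four_mul_emod_two (m : ℕ) (p : ℤ) : p % (4 * m) % 2 = p % 2 :=
  Int.emod_emod_of_dvd p ⟨2 * m, by ring⟩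

variable (hm : 0 < m)
include hm

lemma cyclePos_eq_iff : cyclePos m p = cyclePos m q ↔ p ≡ q [ZMOD 4 * m] := by
  refine ⟨fun h ↦ ?_, cyclePos_congr⟩
  have hp := Int.emod_nonneg p (show (4 * m : ℤ) ≠ 0 by omega)
  have hq := Int.emod_nonneg q (show (4 * m : ℤ) ≠ 0 by omega)
  unfold cyclePos at h
  unfold Int.ModEq
  split_ifs at h <;> omega

lemma cyclePos_ne_of_not_four_dvd (h : ¬ (4 : ℤ) ∣ q - p) : cyclePos m p ≠ cyclePos m q :=
  fun he ↦ h ((dvd_mul_right 4 (m : ℤ)).trans ((cyclePos_eq_iff hm).1 he).dvd)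

lemma cyclePos_pos_of_odd (h : Odd p) : 0 < cyclePos m p := by
  have := emod_four_mul_emod_two m p
  have := Int.emod_nonneg p (show (4 * m : ℤ) ≠ 0 by omega)
  rw [Int.odd_iff] at h
  unfold cyclePos; rw [if_neg (by omega)]; omega

lemma cyclePos_neg_of_even (h : Even p) : cyclePos m p < 0 := by
  have := emod_four_mul_emod_two m p
  have := Int.emod_nonneg p (show (4 * m : ℤ) ≠ 0 by omega)
  rw [Int.even_iff] at h
  unfold cyclePos; rw [if_pos (by omega)]; omega

lemma cyclePos_add_one_of_even (h : Even p) : cyclePos m (p + 1) = -cyclePos m p := by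
  have := emod_four_mul_emod_two m p
  have := Int.emod_nonneg p (show (4 * m : ℤ) ≠ 0 by omega)
  have := Int.emod_lt_of_pos p (show (0 : ℤ) < 4 * m by omega)
  rw [Int.even_iff] at h
  obtain ⟨k, hk1, hk2, hk⟩ : ∃ k : ℤ, 1 ≤ k ∧ k ≤ 2 * m ∧ p % (4 * m) = 2 * k - 2 :=
    ⟨p % (4 * m) / 2 + 1, by omega, by omega, by omega⟩
  have hsucc : p + 1 ≡ 2 * k - 1 [ZMOD 4 * m] := by
    rw [show 2 * k - 1 = p % (4 * m) + 1 by omega]; exact ((Int.mod_modEq p _).add_right 1).symm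
  rw [cyclePos_congr hsucc, ← cyclePos_emod p, hk, cyclePos_two_mul_sub_one hk1 hk2,
    cyclePos_two_mul_sub_two hk1 hk2, neg_neg]

end cyclePos

namespace IsCycleSigma1

variable {m : ℕ} {σ : Equiv.Perm ℤ}

lemma apply_cyclePos (hm : 0 < m) (hσ : IsCycleSigma1 m σ) (p : ℤ) :
    σ (cyclePos m p) = cyclePos m (p + 1) := by
  obtain ⟨h_neg, h_pos, h_top, -⟩ := hσ
  have := Int.emod_nonneg p (show (4 * m : ℤ) ≠ 0 by omega)
  have := Int.emod_lt_of_pos p (show (0 : ℤ) < 4 * m by omega)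
  have hsucc : p + 1 ≡ p % (4 * m) + 1 [ZMOD 4 * m] := ((Int.mod_modEq p _).add_right 1).symm
  rw [← cyclePos_emod p, cyclePos_congr hsucc]
  obtain ⟨k, hk1, hk2, hk | hk⟩ : ∃ k : ℤ, 1 ≤ k ∧ k ≤ 2 * m ∧
      (p % (4 * m) = 2 * k - 2 ∨ p % (4 * m) = 2 * k - 1) :=
    ⟨p % (4 * m) / 2 + 1, by omega, by omega, by omega⟩
  · rw [hk, cyclePos_two_mul_sub_two hk1 hk2, show 2 * k - 2 + 1 = 2 * k - 1 by ring,
      cyclePos_two_mul_sub_one hk1 hk2, h_neg k hk1 hk2]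
  · rw [hk, cyclePos_two_mul_sub_one hk1 hk2]
    rcases hk2.lt_or_eq with hlt | rfl
    · rw [h_pos k hk1 hlt, show 2 * k - 1 + 1 = 2 * (k + 1) - 2 by ring,
        cyclePos_two_mul_sub_two (by omega) (by omega)]
    · rw [h_top, show 2 * (2 * m : ℤ) - 1 + 1 = 2 * 1 - 2 + 4 * m * 1 by ring,
        cyclePos_congr Int.modEq_add_fac_self, cyclePos_two_mul_sub_two le_rfl (by omega)]

lemma zpow_apply_cyclePos (hm : 0 < m) (hσ : IsCycleSigma1 m σ) (z p : ℤ) :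
    (σ ^ z) (cyclePos m p) = cyclePos m (p + z) := by
  induction z using Int.induction_on generalizing p with
  | zero => simp
  | succ n ih =>
    rw [zpow_add_one, Equiv.Perm.mul_apply, hσ.apply_cyclePos hm, ih, add_right_comm, add_assoc]
  | pred n ih =>
    rw [zpow_sub_one, Equiv.Perm.mul_apply, Equiv.Perm.inv_eq_iff_eq.2
      (by rw [hσ.apply_cyclePos hm, sub_add_cancel]), ih]
    ring_nf

end IsCycleSigma1

lemma Finpartition.mem_of_forall_reflect {α : Type*} [DecidableEq α] {s : Finset α}
    (P : Finpartition s) {f : ℤ → α} {c : ℤ} (h : ∀ p, ∃ B ∈ P.parts, f p ∈ B ∧ f (c - p) ∈ B)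
    {B : Finset α} (hB : B ∈ P.parts) {p : ℤ} (hp : f p ∈ B) : f (c - p) ∈ B := by
  obtain ⟨B', hB', hpB', hcB'⟩ := h p
  rwa [P.eq_of_mem_parts hB hB' hp hpB']

-- Periodicity of the cycle turns the nonnegative offsets `t` into arbitrary positions `p`.
lemma exists_mem_parts_cyclePos_reflect {m : ℕ} (hm : 0 < m) {σ : Equiv.Perm ℤ}
    (hσ : IsCycleSigma1 m σ) {s : Finset ℤ} (P : Finpartition s) {a : ℤ}
    (h : ∀ t : ℕ, ∃ B ∈ P.parts,
      (σ ^ ((t : ℤ) + 1)) (cyclePos m a) ∈ B ∧ (σ ^ (-(t : ℤ))) (cyclePos m a) ∈ B) (p : ℤ) :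
    ∃ B ∈ P.parts, cyclePos m p ∈ B ∧ cyclePos m (2 * a + 1 - p) ∈ B := by
  set t := (p - a - 1) % (4 * m)
  have ht0 : 0 ≤ t := Int.emod_nonneg _ (by omega)
  have htmod : t ≡ p - a - 1 [ZMOD 4 * m] := Int.mod_modEq _ _
  obtain ⟨B, hB, h₁, h₂⟩ := h t.toNat
  rw [Int.toNat_of_nonneg ht0, hσ.zpow_apply_cyclePos hm] at h₁ h₂
  refine ⟨B, hB, ?_, ?_⟩
  · rwa [← cyclePos_congr (p := a + (t + 1))
      (by convert htmod.add_right (a + 1) using 1 <;> ring)]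
  · rwa [← cyclePos_congr (p := a + -t) (by convert htmod.neg.add_right a using 1 <;> ring)]

lemma eq_of_mem_block {B : Finset ℤ}
    (hB : (∃ k l : ℤ, B = {-k, k, -l, l}) ∨ (∃ k l : ℤ, B = {k, -l}))
    {x y z : ℤ} (hx : 0 < x) (hy : 0 < y) (hz : z < 0) (hxB : x ∈ B) (hyB : y ∈ B) (hzB : z ∈ B)
    (hzx : z ≠ -x) (hyz : y ≠ -z) : y = x := by
  rcases hB with ⟨k, l, rfl⟩ | ⟨k, l, rfl⟩ <;>
  simp only [Finset.mem_insert, Finset.mem_singleton] at hxB hyB hzB <;> omega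

lemma eq_or_eq_add_of_dvd_sub {m : ℕ} {a b : ℤ} (hab : a ≤ b) (hb : b - a < 2 * m)
    (hdvd : (m : ℤ) ∣ b - a) : b = a ∨ b = a + m := by
  obtain ⟨c, hc⟩ := hdvd
  have hc0 : 0 ≤ c := by nlinarith
  have hc1 : c < 2 := by nlinarith
  interval_cases c <;> [left; right] <;> linarith

theorem stmt11_general (m₁ : ℕ) (hm₁ : 1 ≤ m₁)
    (σ : Equiv.Perm ℤ) (hσ : IsCycleSigma1 m₁ σ)
    (π : Finpartition (pmSet m₁))
    (hforms : ∀ B ∈ π.parts,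
      (∃ k l : ℤ, 1 ≤ k ∧ k ≤ 2 * (m₁ : ℤ) ∧ 1 ≤ l ∧ l ≤ 2 * (m₁ : ℤ) ∧
        B = ({-k, k, -l, l} : Finset ℤ)) ∨
      (∃ k l : ℤ, 1 ≤ k ∧ k ≤ 2 * (m₁ : ℤ) ∧ 1 ≤ l ∧ l ≤ 2 * (m₁ : ℤ) ∧
        B = ({k, -l} : Finset ℤ)))
    (kα kβ : ℤ) (hle : kα ≤ kβ)
    (hkα : 1 ≤ kα ∧ kα ≤ 2 * (m₁ : ℤ)) (hkβ : 1 ≤ kβ ∧ kβ ≤ 2 * (m₁ : ℤ))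
    (hrelα : ∀ t : ℕ, ∃ B ∈ π.parts,
      (σ ^ ((t : ℤ) + 1)) kα ∈ B ∧ (σ ^ (-(t : ℤ))) kα ∈ B)
    (hrelβ : ∀ t : ℕ, ∃ B ∈ π.parts,
      (σ ^ ((t : ℤ) + 1)) kβ ∈ B ∧ (σ ^ (-(t : ℤ))) kβ ∈ B) :
    kβ = kα ∨ kβ = kα + m₁ := by
  have hm : 0 < m₁ := hm₁
  set a := 2 * kα - 1
  have ha : cyclePos m₁ a = kα := cyclePos_two_mul_sub_one hkα.1 hkα.2
  have hb : cyclePos m₁ (2 * kβ - 1) = kβ := cyclePos_two_mul_sub_one hkβ.1 hkβ.2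
  have reflα := exists_mem_parts_cyclePos_reflect hm hσ π (ha ▸ hrelα)
  have reflβ := exists_mem_parts_cyclePos_reflect hm hσ π (hb ▸ hrelβ)
  -- The reflections about the two centres of symmetry compose to the translation by `4 (kβ - kα)`.
  obtain ⟨B, hB, haB, hmirror⟩ := reflα a
  have htrans := π.mem_of_forall_reflect reflβ hB hmirror
  rw [show 2 * a + 1 - a = a + 1 by ring] at hmirror
  rw [show 2 * (2 * kβ - 1) + 1 - (2 * a + 1 - a) = a + 4 * (kβ - kα) by ring] at htrans
  have hodd : Odd (a + 4 * (kβ - kα)) := ⟨2 * (kβ - kα) + kα - 1, by ring⟩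
  have heven : Even (a + 1) := ⟨kα, by ring⟩
  have hshape : (∃ k l : ℤ, B = {-k, k, -l, l}) ∨ (∃ k l : ℤ, B = {k, -l}) := by
    rcases hforms B hB with ⟨k, l, -, -, -, -, hkl⟩ | ⟨k, l, -, -, -, -, hkl⟩
    exacts [.inl ⟨k, l, hkl⟩, .inr ⟨k, l, hkl⟩]
  have hback : cyclePos m₁ (a + 1) ≠ -cyclePos m₁ a := by
    rw [ha, ← cyclePos_two_mul_sub_two hkα.1 hkα.2]
    exact cyclePos_ne_of_not_four_dvd hm (by omega)
  have hforward : cyclePos m₁ (a + 4 * (kβ - kα)) ≠ -cyclePos m₁ (a + 1) := by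
    rw [← cyclePos_add_one_of_even hm heven, add_assoc]
    exact cyclePos_ne_of_not_four_dvd hm (by omega)
  have hperiod := eq_of_mem_block hshape (cyclePos_pos_of_odd hm ⟨kα - 1, by ring⟩)
    (cyclePos_pos_of_odd hm hodd) (cyclePos_neg_of_even hm heven) haB htrans hmirror hback hforward
  rw [cyclePos_eq_iff hm, Int.modEq_iff_dvd, show a - (a + 4 * (kβ - kα)) = 4 * (kα - kβ) by ring,
    mul_dvd_mul_iff_left four_ne_zero, dvd_sub_comm] at hperiod
  exact eq_or_eq_add_of_dvd_sub hle (by omega) hperiod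

/-- If `π` is an even partition of `[±2m₁]` with all blocks of the form `{−k,k,−l,l}` or
`{k,−l}`, and `k_α ≤ k_β` in `[2m₁]` both satisfy `σ^{t+1}(k) ∼_π σ^{−t}(k)` for all `t ≥ 0`,
then `k_β = k_α` or `k_β = k_α + m₁`. -/
theorem stmt11 (m₁ : ℕ) (hm₁ : 1 ≤ m₁)
    (σ : Equiv.Perm ℤ) (hσ : IsCycleSigma1 m₁ σ)
    (π : Finpartition (pmSet m₁))
    (heven : ∀ B ∈ π.parts, Even B.card)
    (hforms : ∀ B ∈ π.parts,
      (∃ k l : ℤ, 1 ≤ k ∧ k ≤ 2 * (m₁ : ℤ) ∧ 1 ≤ l ∧ l ≤ 2 * (m₁ : ℤ) ∧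
        B = ({-k, k, -l, l} : Finset ℤ)) ∨
      (∃ k l : ℤ, 1 ≤ k ∧ k ≤ 2 * (m₁ : ℤ) ∧ 1 ≤ l ∧ l ≤ 2 * (m₁ : ℤ) ∧
        B = ({k, -l} : Finset ℤ)))
    (kα kβ : ℤ) (hle : kα ≤ kβ)
    (hkα : 1 ≤ kα ∧ kα ≤ 2 * (m₁ : ℤ)) (hkβ : 1 ≤ kβ ∧ kβ ≤ 2 * (m₁ : ℤ))
    (hrelα : ∀ t : ℕ, ∃ B ∈ π.parts,
      (σ ^ ((t : ℤ) + 1)) kα ∈ B ∧ (σ ^ (-(t : ℤ))) kα ∈ B)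
    (hrelβ : ∀ t : ℕ, ∃ B ∈ π.parts,
      (σ ^ ((t : ℤ) + 1)) kβ ∈ B ∧ (σ ^ (-(t : ℤ))) kβ ∈ B) :
    kβ = kα ∨ kβ = kα + m₁ :=
  stmt11_general m₁ hm₁ σ hσ π hforms kα kβ hle hkα hkβ hrelα hrelβ
end

section
/- Let m ≥ 1, let π be an even partition of [±2m], and let π_odd denote the restriction of π to the odd elements of [±2m]. If π_odd is an even partition and every block of π has the form {k, −l} or {−k, k, −l, l} with k, l positive, then π has no block of size two of the form {k, l} or {−k, −l} with k+l odd; consequently every block of π of size four is of the form {k, l, −k, −l}, i.e. the undirected graph G_π has only double-loops as connected components. -/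
open scoped Classical

/-!
A two-element block whose elements differ in parity would contain exactly one odd element,
against the evenness of `π_odd`. Every admissible block `{k, -l}` or `{-k, k, -l, l}` contains a
positive and a negative element, so no block `{k, l}` or `{-k, -l}` with `k, l > 0` occurs. A pair
`{k, -l}` has at most two elements, so a four-element block is `{-k, k, -l, l}`.
-/

theorem Finset.iff_of_card_eq_two_of_even_card_filter {α : Type*} {p : α → Prop}
    [DecidablePred p] {s : Finset α} (hs : s.card = 2) (he : Even (s.filter p).card)
    {a b : α} (ha : a ∈ s) (hb : b ∈ s) : p a ↔ p b := by
  obtain ⟨x, y, hxy, rfl⟩ := Finset.card_eq_two.1 hs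
  have hxy' : p x ↔ p y := by
    by_cases hx : p x <;> by_cases hy : p y <;>
      simp_all [Finset.filter_insert, Finset.filter_singleton, Nat.even_iff]
  simp only [Finset.mem_insert, Finset.mem_singleton] at ha hb
  rcases ha with rfl | rfl <;> rcases hb with rfl | rfl <;> tauto

def IsAdmissibleBlock (n : ℤ) (B : Finset ℤ) : Prop :=
  (∃ k l : ℤ, 1 ≤ k ∧ k ≤ n ∧ 1 ≤ l ∧ l ≤ n ∧ B = ({k, -l} : Finset ℤ)) ∨
    (∃ k l : ℤ, 1 ≤ k ∧ k ≤ n ∧ 1 ≤ l ∧ l ≤ n ∧ B = ({-k, k, -l, l} : Finset ℤ))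

namespace IsAdmissibleBlock

variable {n : ℤ} {B : Finset ℤ}

theorem exists_pos_mem_and_neg_mem (hB : IsAdmissibleBlock n B) :
    ∃ k l : ℤ, 0 < k ∧ 0 < l ∧ k ∈ B ∧ -l ∈ B := by
  rcases hB with ⟨k, l, hk, -, hl, -, rfl⟩ | ⟨k, l, hk, -, hl, -, rfl⟩ <;>
    exact ⟨k, l, hk, hl, by simp, by simp⟩

theorem ne_pair_of_pos (hB : IsAdmissibleBlock n B) {k l : ℤ} (hk : 0 < k) (hl : 0 < l) :
    B ≠ {k, l} := by
  rintro rfl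
  obtain ⟨-, l', -, hl', -, hneg⟩ := hB.exists_pos_mem_and_neg_mem
  simp only [Finset.mem_insert, Finset.mem_singleton] at hneg
  omega

theorem ne_neg_pair_of_pos (hB : IsAdmissibleBlock n B) {k l : ℤ} (hk : 0 < k) (hl : 0 < l) :
    B ≠ {-k, -l} := by
  rintro rfl
  obtain ⟨k', -, hk', -, hpos, -⟩ := hB.exists_pos_mem_and_neg_mem
  simp only [Finset.mem_insert, Finset.mem_singleton] at hpos
  omega

theorem exists_eq_of_card_eq_four (hB : IsAdmissibleBlock n B) (hcard : B.card = 4) :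
    ∃ k l : ℤ, 1 ≤ k ∧ k ≤ n ∧ 1 ≤ l ∧ l ≤ n ∧ B = ({k, l, -k, -l} : Finset ℤ) := by
  rcases hB with ⟨k, l, -, -, -, -, rfl⟩ | ⟨k, l, hk, hkn, hl, hln, rfl⟩
  · have := Finset.card_le_two (a := k) (b := -l)
    omega
  · refine ⟨k, l, hk, hkn, hl, hln, ?_⟩
    rw [Finset.insert_comm, Finset.pair_comm (-l) l, Finset.insert_comm (-k) l]

end IsAdmissibleBlock

theorem stmt13_general (m : ℕ) (π : Finpartition (pmSet m))
    (hodd : ∀ B ∈ π.parts, Even ((B.filter (fun x => Odd x)).card))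
    (hforms : ∀ B ∈ π.parts,
      (∃ k l : ℤ, 1 ≤ k ∧ k ≤ 2 * (m : ℤ) ∧ 1 ≤ l ∧ l ≤ 2 * (m : ℤ) ∧
        B = ({k, -l} : Finset ℤ)) ∨
      (∃ k l : ℤ, 1 ≤ k ∧ k ≤ 2 * (m : ℤ) ∧ 1 ≤ l ∧ l ≤ 2 * (m : ℤ) ∧
        B = ({-k, k, -l, l} : Finset ℤ))) :
    (∀ B ∈ π.parts, B.card = 2 → ∀ a ∈ B, ∀ b ∈ B, (Odd a ↔ Odd b)) ∧
    (∀ k l : ℤ, 1 ≤ k → 1 ≤ l → Odd (k + l) →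
      ({k, l} : Finset ℤ) ∉ π.parts ∧ ({-k, -l} : Finset ℤ) ∉ π.parts) ∧
    (∀ B ∈ π.parts, B.card = 4 →
      ∃ k l : ℤ, 1 ≤ k ∧ k ≤ 2 * (m : ℤ) ∧ 1 ≤ l ∧ l ≤ 2 * (m : ℤ) ∧
        B = ({k, l, -k, -l} : Finset ℤ)) := by
  have hadm : ∀ B ∈ π.parts, IsAdmissibleBlock (2 * m) B := hforms
  refine ⟨fun B hB hcard a ha b hb =>
      Finset.iff_of_card_eq_two_of_even_card_filter hcard (hodd B hB) ha hb,
    fun k l hk hl _ => ⟨fun h => ?_, fun h => ?_⟩,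
    fun B hB hcard => (hadm B hB).exists_eq_of_card_eq_four hcard⟩
  · exact (hadm _ h).ne_pair_of_pos hk hl rfl
  · exact (hadm _ h).ne_neg_pair_of_pos hk hl rfl

/-- Let `π` be an even partition of `[±2m]` whose restriction `π_odd` to the odd elements is
even and all of whose blocks have the form `{k,−l}` or `{−k,k,−l,l}` with `k, l` positive.
Then `π` has no two-element block whose two elements have different parities (no block
`{k,l}` or `{−k,−l}` with `k+l` odd), and every four-element block of `π` has the form
`{k, l, −k, −l}`; i.e. `G_π` has only double-loops as components. -/
theorem stmt13 (m : ℕ) (hm : 1 ≤ m) (π : Finpartition (pmSet m))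
    (heven : ∀ B ∈ π.parts, Even B.card)
    (hodd : ∀ B ∈ π.parts, Even ((B.filter (fun x => Odd x)).card))
    (hforms : ∀ B ∈ π.parts,
      (∃ k l : ℤ, 1 ≤ k ∧ k ≤ 2 * (m : ℤ) ∧ 1 ≤ l ∧ l ≤ 2 * (m : ℤ) ∧
        B = ({k, -l} : Finset ℤ)) ∨
      (∃ k l : ℤ, 1 ≤ k ∧ k ≤ 2 * (m : ℤ) ∧ 1 ≤ l ∧ l ≤ 2 * (m : ℤ) ∧
        B = ({-k, k, -l, l} : Finset ℤ))) :
    (∀ B ∈ π.parts, B.card = 2 → ∀ a ∈ B, ∀ b ∈ B, (Odd a ↔ Odd b)) ∧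
    (∀ k l : ℤ, 1 ≤ k → 1 ≤ l → Odd (k + l) →
      ({k, l} : Finset ℤ) ∉ π.parts ∧ ({-k, -l} : Finset ℤ) ∉ π.parts) ∧
    (∀ B ∈ π.parts, B.card = 4 →
      ∃ k l : ℤ, 1 ≤ k ∧ k ≤ 2 * (m : ℤ) ∧ 1 ≤ l ∧ l ≤ 2 * (m : ℤ) ∧
        B = ({k, l, -k, -l} : Finset ℤ)) :=
  stmt13_general m π hodd hforms
end

section
/- Let W be an N×N uniformly random signed permutation matrix (W = DP with P a uniform permutation matrix and D an independent diagonal matrix with i.i.d. uniform ±1 entries). Fix functions i, j : F → [N] on a finite index set F and consider E[∏_{f ∈ F} W(i_f, j_f)]. If ker(i) ≠ ker(j), this expectation is 0; if ker(i) = ker(j) = π and π is an even partition, the expectation equals (N − #(π))!/N!. -/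
open scoped Classical

/-!
Averaging over the signs first: the sign of a product is `∏_a ε_a ^ |i⁻¹(a)|`, which is `1`
when every block of `ker i` is even, whereas the permutation part `∏_f [τ (i f) = j f]` is the
indicator of `τ ∘ i = j`. Such a `τ` exists iff `ker i = ker j`, and then the solutions form a
coset of the pointwise stabiliser of `range i`, which is a copy of the symmetric group on the
remaining `N - #(π)` points.
-/

section SignedPermMoments

open Finset Equiv
open scoped Nat

variable {α F : Type*}

namespace Equiv.Perm

theorem apply_eq_iff_of_comp_eq {i j : F → α} {τ : Perm α} (h : ∀ f, τ (i f) = j f)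
    (f g : F) : i f = i g ↔ j f = j g := by
  simp only [← h, EmbeddingLike.apply_eq_iff_eq]

theorem exists_comp_eq [Finite α] {i j : F → α} (hker : ∀ f g, i f = i g ↔ j f = j g) :
    ∃ τ : Perm α, ∀ f, τ (i f) = j f := by
  have hj : j.FactorsThrough i := fun f g hfg => (hker f g).mp hfg
  obtain ⟨τ, hτ⟩ := exists_extending_pair (fun a : Set.range i => (a : α))
    (fun a => Function.extend i j id a) Subtype.val_injective (by
      rintro ⟨_, f, rfl⟩ ⟨_, g, rfl⟩ hfg
      simp only [hj.extend_apply] at hfg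
      exact Subtype.ext ((hker f g).mpr hfg))
  exact ⟨τ, fun f => by simpa [hj.extend_apply] using hτ ⟨i f, f, rfl⟩⟩

theorem card_comp_eq [Fintype α] [DecidableEq α] [Fintype F] {i j : F → α} (hker : ∀ f g, i f = i g ↔ j f = j g) :
    Fintype.card {τ : Perm α // ∀ f, τ (i f) = j f} =
      (Fintype.card α - (univ.image i).card)! := by
  obtain ⟨τ₀, hτ₀⟩ := exists_comp_eq hker
  let fixRange : {τ : Perm α // ∀ f, τ (i f) = j f} ≃ {σ : Perm α // ∀ f, σ (i f) = i f} :=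
    (Equiv.mulLeft τ₀⁻¹).subtypeEquiv fun τ => by
      simp only [coe_mulLeft, mul_apply, inv_eq_iff_eq, hτ₀]
  let permCompl : {σ : Perm α // ∀ f, σ (i f) = i f} ≃ Perm {a // a ∉ univ.image i} :=
    (subtypeEquivRight fun σ => by simp).trans (Perm.subtypeEquivSubtypePerm _).symm
  rw [Fintype.card_congr (fixRange.trans permCompl), Fintype.card_perm,
    Fintype.card_subtype_compl, Fintype.card_coe]

end Equiv.Perm

theorem prod_sign_eq_one_of_even_fibres {β R : Type*} [DecidableEq β] [Fintype F]
    [CommMonoid R] [HasDistribNeg R] (i : F → β) (e : β → Bool)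
    (heven : ∀ f, Even (univ.filter fun g => i g = i f).card) :
    ∏ f, (if e (i f) then (1 : R) else -1) = 1 := by
  rw [prod_comp (fun b => if e b then (1 : R) else -1) i]
  refine prod_eq_one fun b hb => ?_
  obtain ⟨f, -, rfl⟩ := mem_image.mp hb
  split_ifs
  · exact one_pow _
  · exact (heven f).neg_one_pow

variable [Fintype α] [DecidableEq α] [Fintype F]

theorem sum_prod_signedPerm_entries_eq_zero {i j : F → α}
    (hker : ¬ ∀ f g, i f = i g ↔ j f = j g) :
    ∑ τ : Perm α, ∑ e : α → Bool, ∏ f,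
      ((if τ (i f) = j f then (1 : ℝ) else 0) * (if e (i f) then 1 else -1)) = 0 := by
  refine sum_eq_zero fun τ _ => sum_eq_zero fun e _ => ?_
  obtain ⟨f, hf⟩ : ∃ f, τ (i f) ≠ j f := by
    contrapose! hker
    exact Perm.apply_eq_iff_of_comp_eq hker
  exact prod_eq_zero (mem_univ f) (by simp [hf])

theorem sum_prod_signedPerm_entries {i j : F → α} (hker : ∀ f g, i f = i g ↔ j f = j g)
    (heven : ∀ f, Even (univ.filter fun g => i g = i f).card) :
    ∑ τ : Perm α, ∑ e : α → Bool, ∏ f,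
      ((if τ (i f) = j f then (1 : ℝ) else 0) * (if e (i f) then 1 else -1)) =
      (Fintype.card α - (univ.image i).card)! * 2 ^ Fintype.card α := by
  simp only [prod_mul_distrib, prod_sign_eq_one_of_even_fibres i _ heven, mul_one, sum_const,
    card_univ, Fintype.card_fun, Fintype.card_bool, nsmul_eq_mul, prod_boole, mem_univ,
    true_implies]
  rw [← mul_sum, sum_boole, ← Fintype.card_subtype, Perm.card_comp_eq hker]
  push_cast
  ring

end SignedPermMoments

theorem stmt14_general (N : ℕ) {F : Type*} [Fintype F] (i j : F → Fin N) :
    (¬ (∀ f g : F, i f = i g ↔ j f = j g) →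
      (∑ τ : Equiv.Perm (Fin N), ∑ e : Fin N → Bool, ∏ f : F,
          ((if τ (i f) = j f then (1 : ℝ) else 0) * (if e (i f) then 1 else -1))) /
        ((Nat.factorial N * 2 ^ N : ℕ) : ℝ) = 0) ∧
    ((∀ f g : F, i f = i g ↔ j f = j g) →
      (∀ f : F, Even ((Finset.univ.filter (fun g : F => i g = i f)).card)) →
      (∑ τ : Equiv.Perm (Fin N), ∑ e : Fin N → Bool, ∏ f : F,
          ((if τ (i f) = j f then (1 : ℝ) else 0) * (if e (i f) then 1 else -1))) /
        ((Nat.factorial N * 2 ^ N : ℕ) : ℝ) =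
      (Nat.factorial (N - (Finset.univ.image i).card) : ℝ) / (Nat.factorial N : ℝ)) := by
  refine ⟨fun hker => by rw [sum_prod_signedPerm_entries_eq_zero hker, zero_div],
    fun hker heven => ?_⟩
  rw [sum_prod_signedPerm_entries hker heven, Fintype.card_fin, Nat.cast_mul, Nat.cast_pow,
    Nat.cast_ofNat, mul_div_mul_right _ _ (by positivity)]

/-- Expectation of a product of entries of a uniformly random `N×N` signed permutation
matrix `W = D·P` (with `P` a uniform permutation matrix and `D` an independent diagonal
matrix of i.i.d. uniform signs), computed as an average over the canonical finite sample
space `Equiv.Perm (Fin N) × (Fin N → Bool)`. If `ker(i) ≠ ker(j)` the expectation is `0`;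
if `ker(i) = ker(j)` is an even partition it equals `(N − #π)!/N!`. -/
theorem stmt14 (N : ℕ) {F : Type*} [Fintype F] [DecidableEq F] (i j : F → Fin N) :
    (¬ (∀ f g : F, i f = i g ↔ j f = j g) →
      (∑ τ : Equiv.Perm (Fin N), ∑ e : Fin N → Bool, ∏ f : F,
          ((if τ (i f) = j f then (1 : ℝ) else 0) * (if e (i f) then 1 else -1))) /
        ((Nat.factorial N * 2 ^ N : ℕ) : ℝ) = 0) ∧
    ((∀ f g : F, i f = i g ↔ j f = j g) →
      (∀ f : F, Even ((Finset.univ.filter (fun g : F => i g = i f)).card)) →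
      (∑ τ : Equiv.Perm (Fin N), ∑ e : Fin N → Bool, ∏ f : F,
          ((if τ (i f) = j f then (1 : ℝ) else 0) * (if e (i f) then 1 else -1))) /
        ((Nat.factorial N * 2 ^ N : ℕ) : ℝ) =
      (Nat.factorial (N - (Finset.univ.image i).card) : ℝ) / (Nat.factorial N : ℝ)) :=
  stmt14_general N i j
end
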